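/- For any two numerical semigroups S_1 and S_2 (each with some non-uniquely-factorable element), there exist infinitely many pairs (λ, μ) with λ ∈ S_1 a non-atom, μ ∈ S_2 a non-atom, gcd(λ, μ) = 1, such that the gluing S = μS_1 + λS_2 is tasty: LD(S) > 1/max Δ(S). -/

import Mathlib

/-!
Take `λ = 2 g` for a generator `g` of `S₁`, and `μ ≡ 1 (mod λ)` a large element of `S₂` with two
factorization lengths. Put `d = max (r₁ · max gen S₁, r₂ · max gen S₂)`: in either factor, an
element with several lengths has, next to each of its lengths, another one within distance `d`.

As `L_S(λμ) = L_{S₁}(λ) ∪ L_{S₂}(μ)` and every length of `μ` exceeds every length of `λ` by more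
than `d`, `max Δ(S) > d`. On the other hand, in every length set of `S` a gap larger than `d` is
adjacent to a gap of at most `d`. Write an endpoint of the gap as `α + β` with `α ∈ L(a)`,
`β ∈ L(b)` and `μa + λb = n`. If `L(a)` or `L(b)` has two elements, `n` has another length within
`d` of `α + β`, necessarily on the far side of the gap. This leaves the case that all four
components have a single length. By coprimality, two representations with `a < a'` have
`b = b' + sμ` with `s ≥ 1`, so `L(b)` would inherit the two lengths of `μ`; hence the two
representations, and so the endpoints, coincide. Each small gap serves at most two large ones, so
the mean gap is at most `(2 max Δ + d) / 3` and `LD(S) ≥ 3 / (2 max Δ + d) > 1 / max Δ`.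
-/

open Finset

namespace LengthDensity

/-- The set of factorizations of `n` with respect to generators `g`. -/
def facs {k : ℕ} (g : Fin k → ℕ) (n : ℕ) : Set (Fin k → ℕ) :=
  {z | ∑ i, z i * g i = n}

/-- Membership in the numerical semigroup generated by `g`. -/
def mem {k : ℕ} (g : Fin k → ℕ) (n : ℕ) : Prop := (facs g n).Nonempty

/-- The set of factorization lengths of `n`. -/
def lengthSet {k : ℕ} (g : Fin k → ℕ) (n : ℕ) : Set ℕ :=
  (fun z => ∑ i, z i) '' facs g n

/-- Length density of an element. -/
noncomputable def LD {k : ℕ} (g : Fin k → ℕ) (n : ℕ) : ℝ :=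
  (((lengthSet g n).ncard : ℝ) - 1) /
    (((sSup (lengthSet g n) : ℕ) : ℝ) - ((sInf (lengthSet g n) : ℕ) : ℝ))

/-- Length density of the semigroup: infimum of `LD` over elements with
non-singleton length set. -/
noncomputable def LDsgp {k : ℕ} (g : Fin k → ℕ) : ℝ :=
  sInf {x : ℝ | ∃ n : ℕ, 2 ≤ (lengthSet g n).ncard ∧ x = LD g n}

/-- The delta set (successive gaps) of a set of naturals. -/
def deltaOf (L : Set ℕ) : Set ℕ :=
  {d | ∃ a ∈ L, ∃ b ∈ L, a < b ∧ (∀ c ∈ L, ¬(a < c ∧ c < b)) ∧ d = b - a}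

/-- The delta set of an element. -/
def delta {k : ℕ} (g : Fin k → ℕ) (n : ℕ) : Set ℕ := deltaOf (lengthSet g n)

/-- The delta set of the semigroup. -/
def Delta {k : ℕ} (g : Fin k → ℕ) : Set ℕ := ⋃ n : ℕ, delta g n

/-- Adjacency in the factorization graph of `n`: two factorizations of `n`
sharing a positive coordinate. -/
def adj {k : ℕ} (g : Fin k → ℕ) (n : ℕ) (z z' : Fin k → ℕ) : Prop :=
  z ∈ facs g n ∧ z' ∈ facs g n ∧ ∃ i, 0 < z i ∧ 0 < z' i

/-- `n` is a Betti element: its factorization graph is disconnected. -/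
def IsBetti {k : ℕ} (g : Fin k → ℕ) (n : ℕ) : Prop :=
  ∃ z ∈ facs g n, ∃ z' ∈ facs g n, ¬ Relation.ReflTransGen (adj g n) z z'

/-- The semigroup is tasty: `LD(S) > 1 / max Δ(S)`. -/
def Tasty {k : ℕ} (g : Fin k → ℕ) : Prop := LDsgp g > 1 / ((sSup (Delta g) : ℕ) : ℝ)

/-- The semigroup is bland: `LD(S) = 1 / max Δ(S)`. -/
def Bland {k : ℕ} (g : Fin k → ℕ) : Prop := LDsgp g = 1 / ((sSup (Delta g) : ℕ) : ℝ)

/-- `g` is a minimal generating set: no generator is a nonnegative integer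
combination of the others. -/
def IsMinGen {k : ℕ} (g : Fin k → ℕ) : Prop :=
  ∀ i, ¬ ∃ z : Fin k → ℕ, z i = 0 ∧ ∑ j, z j * g j = g i

/-- `n` is a non-atom of the semigroup generated by `g`:
it is a sum of two nonzero elements. -/
def NonAtom {k : ℕ} (g : Fin k → ℕ) (n : ℕ) : Prop :=
  ∃ a b : ℕ, 0 < a ∧ 0 < b ∧ mem g a ∧ mem g b ∧ n = a + b

lemma three_mul_sum_le (f : ℕ → ℕ) {n D d : ℕ} (hdD : d ≤ D) (hD : ∀ i < n, f i ≤ D)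
    (hadj : ∀ i < n, d < f i → (0 < i ∧ f (i - 1) ≤ d) ∨ (i + 1 < n ∧ f (i + 1) ≤ d)) :
    3 * ∑ i ∈ Finset.range n, f i ≤ (2 * D + d) * n := by
  set small := (Finset.range n).filter (f · ≤ d)
  set large := (Finset.range n).filter (¬ f · ≤ d)
  have hlarge : large ⊆ small.image (· + 1) ∪ small.image (· - 1) := by
    intro i hi
    simp only [large, Finset.mem_filter, Finset.mem_range, not_le] at hi
    simp only [small, Finset.mem_union, Finset.mem_image, Finset.mem_filter, Finset.mem_range]
    rcases hadj i hi.1 hi.2 with ⟨hi0, hf⟩ | ⟨hin, hf⟩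
    · exact .inl ⟨i - 1, ⟨by omega, hf⟩, by omega⟩
    · exact .inr ⟨i + 1, ⟨hin, hf⟩, by omega⟩
  have hcard : large.card ≤ 2 * small.card :=
    (Finset.card_le_card hlarge).trans <| (Finset.card_union_le _ _).trans <| by
      have := Finset.card_image_le (s := small) (f := (· + 1))
      have := Finset.card_image_le (s := small) (f := (· - 1))
      omega
  have hn : small.card + large.card = n :=
    (Finset.card_filter_add_card_filter_not _).trans (Finset.card_range n)
  have hsmall : ∑ i ∈ small, f i ≤ small.card * d := by
    simpa using Finset.sum_le_card_nsmul small f d fun i hi => (Finset.mem_filter.mp hi).2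
  have hsum_large : ∑ i ∈ large, f i ≤ large.card * D := by
    simpa using Finset.sum_le_card_nsmul large f D fun i hi =>
      hD i (Finset.mem_range.mp (Finset.mem_filter.mp hi).1)
  have hsum : ∑ i ∈ Finset.range n, f i = ∑ i ∈ small, f i + ∑ i ∈ large, f i :=
    (Finset.sum_filter_add_sum_filter_not _ _ _).symm
  rw [hsum, ← hn]
  obtain ⟨e, rfl⟩ := Nat.exists_eq_add_of_le hdD
  nlinarith [Nat.mul_le_mul_left e hcard]

def Consecutive (L : Set ℕ) (x y : ℕ) : Prop :=
  x ∈ L ∧ y ∈ L ∧ x < y ∧ ∀ c ∈ L, ¬(x < c ∧ c < y)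

lemma three_mul_sSup_sub_sInf_le {L : Set ℕ} (hL : L.Finite) (hne : L.Nonempty) {D d : ℕ}
    (hdD : d ≤ D) (hgap : ∀ x y, Consecutive L x y → y ≤ x + D)
    (hadj : ∀ x y, Consecutive L x y → x + d < y →
      (∃ x' ∈ L, x' < x ∧ x ≤ x' + d) ∨ (∃ y' ∈ L, y < y' ∧ y' ≤ y + d)) :
    3 * (sSup L - sInf L) ≤ (2 * D + d) * (L.ncard - 1) := by
  set l := Nat.nth (· ∈ L)
  set N := hL.toFinset.card
  have hN : L.ncard = N := Set.ncard_eq_toFinset_card L hL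
  have hmem : ∀ i < N, l i ∈ L := fun i hi => Nat.nth_mem_of_lt_card hL hi
  have hmono : ∀ i j, i ≤ j → j < N → l i ≤ l j := fun i j hij hj =>
    Nat.nth_le_nth_of_lt_card hL hij hj
  have hindex : ∀ x ∈ L, ∃ j < N, l j = x := fun x hx => Nat.exists_lt_card_finite_nth_eq hL hx
  have hcons : ∀ i, i + 1 < N → Consecutive L (l i) (l (i + 1)) := fun i hi =>
    ⟨hmem i (by omega), hmem (i + 1) hi, Nat.nth_lt_nth_of_lt_card hL (by omega) hi,
      fun c hc ⟨h₁, h₂⟩ => (Nat.le_nth_of_lt_nth_succ h₂ hc).not_gt h₁⟩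
  have hN0 : 0 < N := hN ▸ (Set.ncard_pos hL).mpr hne
  have hinf : l 0 = sInf L := Nat.nth_zero
  have hsup : l (N - 1) = sSup L := by
    obtain ⟨j, hj, hlj⟩ := hindex _ (Nat.sSup_mem hne hL.bddAbove)
    exact le_antisymm (le_csSup hL.bddAbove (hmem _ (by omega)))
      (hlj ▸ hmono j (N - 1) (by omega) (by omega))
  have htel : ∀ m ≤ N - 1, ∑ i ∈ Finset.range m, (l (i + 1) - l i) = l m - l 0 := by
    intro m hm
    induction m with
    | zero => simp
    | succ m ih =>
      rw [Finset.sum_range_succ, ih (by omega)]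
      have := hmono 0 m (by omega) (by omega)
      have := hmono m (m + 1) (by omega) (by omega)
      omega
  rw [← hinf, ← hsup, ← htel _ le_rfl, hN]
  refine three_mul_sum_le _ hdD (fun i hi => ?_) (fun i hi hbig => ?_)
  · have := hgap _ _ (hcons i (by omega))
    omega
  rcases hadj _ _ (hcons i (by omega)) (by omega) with ⟨x', hx', hlt, hle⟩ | ⟨y', hy', hlt, hle⟩
  · obtain ⟨j, hj, rfl⟩ := hindex x' hx'
    have hji : j < i := Nat.lt_of_nth_lt_nth_of_lt_card hL hlt hj
    have : l j ≤ l (i - 1) := Nat.le_nth_of_lt_nth_succ (p := (· ∈ L))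
      (by rwa [Nat.sub_add_cancel (by omega)]) (hmem j hj)
    exact .inl ⟨by omega, by rw [Nat.sub_add_cancel (by omega)]; omega⟩
  · obtain ⟨j, hj, rfl⟩ := hindex y' hy'
    have hij : i + 1 < j := Nat.lt_of_nth_lt_nth_of_lt_card hL hlt (by omega)
    have := hmono (i + 1 + 1) j (by omega) hj
    exact .inr ⟨by omega, by omega⟩

section Factorizations

variable {k : ℕ} {g : Fin k → ℕ}

lemma sum_add_single_mul (w : Fin k → ℕ) (i : Fin k) (c : ℕ) :
    ∑ j, (w + Pi.single i c : Fin k → ℕ) j * g j = ∑ j, w j * g j + c * g i := by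
  simp [add_mul, Finset.sum_add_distrib, Pi.single_apply]

lemma sum_add_single (w : Fin k → ℕ) (i : Fin k) (c : ℕ) :
    ∑ j, (w + Pi.single i c : Fin k → ℕ) j = ∑ j, w j + c := by
  simp [Finset.sum_add_distrib]

lemma single_mem_facs (i : Fin k) (c : ℕ) : Pi.single i c ∈ facs g (c * g i) := by
  simpa [facs] using sum_add_single_mul (g := g) 0 i c

lemma mem_zero : mem g 0 := ⟨0, by simp [facs]⟩

lemma mem_gen (i : Fin k) : mem g (g i) := ⟨_, by simpa using single_mem_facs (g := g) i 1⟩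

lemma add_mem_facs {a b : ℕ} {z w : Fin k → ℕ} (hz : z ∈ facs g a) (hw : w ∈ facs g b) :
    z + w ∈ facs g (a + b) := by
  simp only [facs, Set.mem_ofPred_eq, Pi.add_apply, add_mul, Finset.sum_add_distrib] at *
  rw [hz, hw]

lemma mem_add {a b : ℕ} (ha : mem g a) (hb : mem g b) : mem g (a + b) :=
  let ⟨_, hz⟩ := ha; let ⟨_, hw⟩ := hb; ⟨_, add_mem_facs hz hw⟩

lemma mem_mul {a : ℕ} (c : ℕ) (ha : mem g a) : mem g (c * a) := by
  induction c with
  | zero => simpa using mem_zero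
  | succ c ih => simpa [add_mul] using mem_add ih ha

lemma mem_of_mem_closure {n : ℕ} (h : n ∈ AddSubmonoid.closure (Set.range g)) : mem g n := by
  induction h using AddSubmonoid.closure_induction with
  | mem _ hx => obtain ⟨i, rfl⟩ := hx; exact mem_gen i
  | zero => exact mem_zero
  | add _ _ _ _ ha hb => exact mem_add ha hb

lemma exists_forall_ge_mem (hgcd : Finset.univ.gcd g = 1) : ∃ N, ∀ m ≥ N, mem g m := by
  obtain ⟨N, hN⟩ := Nat.exists_mem_closure_of_ge (Set.range g)
  have hdvd : Nat.setGcd (Set.range g) ∣ 1 :=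
    hgcd ▸ Finset.dvd_gcd fun i _ => Nat.setGcd_dvd_of_mem ⟨i, rfl⟩
  exact ⟨N, fun m hm => mem_of_mem_closure (hN m hm (Nat.dvd_one.mp hdvd ▸ one_dvd m))⟩

lemma add_mem_lengthSet {a b ℓ₁ ℓ₂ : ℕ} (h₁ : ℓ₁ ∈ lengthSet g a) (h₂ : ℓ₂ ∈ lengthSet g b) :
    ℓ₁ + ℓ₂ ∈ lengthSet g (a + b) := by
  obtain ⟨z, hz, rfl⟩ := h₁; obtain ⟨w, hw, rfl⟩ := h₂
  exact ⟨z + w, add_mem_facs hz hw, by simp [Finset.sum_add_distrib]⟩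

lemma mul_gen_mem_lengthSet (c : ℕ) (i : Fin k) : c ∈ lengthSet g (c * g i) :=
  ⟨_, single_mem_facs i c, by simp⟩

lemma mem_of_mem_lengthSet {n ℓ : ℕ} (h : ℓ ∈ lengthSet g n) : mem g n :=
  let ⟨z, hz, _⟩ := h; ⟨z, hz⟩

lemma lengthSet_nonempty {n : ℕ} (h : mem g n) : (lengthSet g n).Nonempty := h.image _

lemma mul_le_of_mem_lengthSet {c n ℓ : ℕ} (hc : ∀ i, c ≤ g i) (h : ℓ ∈ lengthSet g n) :
    c * ℓ ≤ n := by
  obtain ⟨z, rfl, rfl⟩ := h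
  rw [Finset.mul_sum]
  exact Finset.sum_le_sum fun i _ => by rw [mul_comm]; exact Nat.mul_le_mul_left _ (hc i)

lemma le_of_mem_lengthSet (hg : ∀ i, 0 < g i) {n ℓ : ℕ} (h : ℓ ∈ lengthSet g n) : ℓ ≤ n := by
  simpa using mul_le_of_mem_lengthSet (c := 1) hg h

lemma le_mul_sup_of_mem_lengthSet {n ℓ : ℕ} (h : ℓ ∈ lengthSet g n) :
    n ≤ ℓ * Finset.univ.sup g := by
  obtain ⟨z, rfl, rfl⟩ := h
  rw [Finset.sum_mul]
  exact Finset.sum_le_sum fun i _ => Nat.mul_le_mul_left _ (Finset.le_sup (Finset.mem_univ i))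

lemma lengthSet_finite (hg : ∀ i, 0 < g i) (n : ℕ) : (lengthSet g n).Finite :=
  (Set.finite_Iic n).subset fun _ h => le_of_mem_lengthSet hg h

lemma lengthSet_zero (hg : ∀ i, 0 < g i) : lengthSet g 0 = {0} :=
  Set.eq_singleton_iff_unique_mem.mpr
    ⟨⟨0, by simp [facs], by simp⟩, fun _ h => Nat.le_zero.mp (le_of_mem_lengthSet hg h)⟩

lemma lengthSet_add_nontrivial {b m : ℕ} (hb : mem g b) (hm : (lengthSet g m).Nontrivial) :
    (lengthSet g (b + m)).Nontrivial := by
  obtain ⟨w, hw⟩ := lengthSet_nonempty hb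
  obtain ⟨u, hu, v, hv, huv⟩ := hm
  exact ⟨w + u, add_mem_lengthSet hw hu, w + v, add_mem_lengthSet hw hv, by omega⟩

lemma mem_lengthSet_of_exchange {n : ℕ} {z : Fin k → ℕ} (hz : z ∈ facs g n) {i j : Fin k}
    (h : g j ≤ z i) : ∑ l, z l - g j + g i ∈ lengthSet g n := by
  obtain ⟨w, rfl⟩ : ∃ w, z = w + Pi.single i (g j) :=
    ⟨z - Pi.single i (g j), by ext l; rcases eq_or_ne l i with rfl | hl <;> simp [*]⟩
  refine ⟨w + Pi.single j (g i), ?_, by simp only [sum_add_single]; omega⟩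
  simp only [facs, Set.mem_ofPred_eq, sum_add_single_mul] at hz ⊢
  rw [← hz, mul_comm]

/-- With `g i₀` the smallest generator: either some larger generator `g i` occurs at least
`g i₀` times, and trading `g i₀` copies of it for `g i` copies of `g i₀` lengthens the
factorization by at most `sup g`, or the factorization is within `k * sup g` of the longest. -/
lemma exists_mem_lengthSet_gt_le (hg : ∀ i, 0 < g i) {n ℓ ℓ' : ℕ} (hℓ : ℓ ∈ lengthSet g n)
    (hℓ' : ℓ' ∈ lengthSet g n) (hlt : ℓ < ℓ') :
    ∃ m ∈ lengthSet g n, ℓ < m ∧ m ≤ ℓ + k * Finset.univ.sup g := by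
  obtain ⟨z, hz, hzℓ⟩ := hℓ
  dsimp only at hzℓ
  subst hzℓ
  have hzl : ∀ i, z i ≤ ∑ l, z l := fun i =>
    Finset.single_le_sum (fun _ _ => Nat.zero_le _) (Finset.mem_univ i)
  have hsup : ∀ i, g i ≤ Finset.univ.sup g := fun i => Finset.le_sup (Finset.mem_univ i)
  have hk : 0 < k := by
    obtain ⟨z', -, hz'⟩ := hℓ'
    obtain ⟨i, -, -⟩ := Finset.exists_ne_zero_of_sum_ne_zero (s := Finset.univ) (f := z')
      (by dsimp only at hz'; omega)
    exact Fin.pos i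
  obtain ⟨i₀, -, hi₀⟩ := Finset.exists_min_image Finset.univ g
    (Finset.univ_nonempty_iff.mpr (Fin.pos_iff_nonempty.mp hk))
  by_cases H : ∃ i, g i₀ < g i ∧ g i₀ ≤ z i
  · obtain ⟨i, hgi, hzi⟩ := H
    refine ⟨_, mem_lengthSet_of_exchange hz hzi, by have := hzl i; omega, ?_⟩
    have := Nat.le_mul_of_pos_left (Finset.univ.sup g) hk
    have := hsup i
    omega
  · push Not at H
    refine ⟨ℓ', hℓ', hlt, ?_⟩
    have hn : n ≤ g i₀ * (k * Finset.univ.sup g + ∑ l, z l) := calc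
      n = ∑ i, z i * g i := hz.symm
      _ ≤ ∑ i, (g i₀ * g i + z i * g i₀) := Finset.sum_le_sum fun i _ => by
        by_cases hi : g i₀ < g i
        · have := Nat.mul_le_mul_right (g i) (H i hi).le
          omega
        · rw [le_antisymm (not_lt.mp hi) (hi₀ i (Finset.mem_univ i))]
          omega
      _ = g i₀ * (∑ i, g i + ∑ i, z i) := by
        rw [Finset.sum_add_distrib, ← Finset.mul_sum, ← Finset.sum_mul]; ring
      _ ≤ g i₀ * (k * Finset.univ.sup g + ∑ l, z l) := by
        gcongr
        simpa using Finset.sum_le_card_nsmul Finset.univ g _ fun i _ => hsup i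
    have hℓ'n := mul_le_of_mem_lengthSet (fun i => hi₀ i (Finset.mem_univ i)) hℓ'
    have := Nat.le_of_mul_le_mul_left (hℓ'n.trans hn) (hg i₀)
    omega

lemma exists_mem_lengthSet_lt_ge (hg : ∀ i, 0 < g i) {n ℓ ℓ' : ℕ} (hℓ : ℓ ∈ lengthSet g n)
    (hℓ' : ℓ' ∈ lengthSet g n) (hlt : ℓ' < ℓ) :
    ∃ m ∈ lengthSet g n, m < ℓ ∧ ℓ ≤ m + k * Finset.univ.sup g := by
  set below := {c | c ∈ lengthSet g n ∧ c < ℓ}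
  have hbdd : BddAbove below := ⟨ℓ, fun c hc => hc.2.le⟩
  obtain ⟨hmem, hmlt⟩ : sSup below ∈ below := Nat.sSup_mem ⟨ℓ', hℓ', hlt⟩ hbdd
  obtain ⟨m', hm', hlt', hle'⟩ := exists_mem_lengthSet_gt_le hg hmem hℓ hmlt
  have : ℓ ≤ m' := not_lt.mp fun h => (le_csSup hbdd ⟨hm', h⟩).not_gt hlt'
  exact ⟨_, hmem, hmlt, by omega⟩

lemma exists_mem_lengthSet_near (hg : ∀ i, 0 < g i) {n ℓ : ℕ} (hℓ : ℓ ∈ lengthSet g n)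
    (hL : (lengthSet g n).Nontrivial) :
    ∃ m ∈ lengthSet g n, m ≠ ℓ ∧ m ≤ ℓ + k * Finset.univ.sup g ∧
      ℓ ≤ m + k * Finset.univ.sup g := by
  obtain ⟨ℓ', hℓ', hne⟩ := hL.exists_ne ℓ
  rcases hne.lt_or_gt with hlt | hlt
  · obtain ⟨m, hm, hmℓ, hle⟩ := exists_mem_lengthSet_lt_ge hg hℓ hℓ' hlt
    exact ⟨m, hm, hmℓ.ne, by omega, hle⟩
  · obtain ⟨m, hm, hmℓ, hle⟩ := exists_mem_lengthSet_gt_le hg hℓ hℓ' hlt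
    exact ⟨m, hm, hmℓ.ne', hle, by omega⟩

lemma le_of_mem_Delta (hg : ∀ i, 0 < g i) {e : ℕ} (he : e ∈ Delta g) :
    e ≤ k * Finset.univ.sup g := by
  obtain ⟨n, x, hx, y, hy, hxy, hnb, rfl⟩ := Set.mem_iUnion.mp he
  obtain ⟨m, hm, hxm, hmx⟩ := exists_mem_lengthSet_gt_le hg hx hy hxy
  have : y ≤ m := not_lt.mp fun h => hnb m hm ⟨hxm, h⟩
  omega

lemma sub_mem_Delta {n x y : ℕ} (h : Consecutive (lengthSet g n) x y) : y - x ∈ Delta g :=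
  Set.mem_iUnion.mpr ⟨n, x, h.1, y, h.2.1, h.2.2.1, h.2.2.2, rfl⟩

lemma div_le_LD (hg : ∀ i, 0 < g i) {n a c : ℕ}
    (hL : (lengthSet g n).Nontrivial) (hc : 0 < c)
    (h : a * (sSup (lengthSet g n) - sInf (lengthSet g n)) ≤ c * ((lengthSet g n).ncard - 1)) :
    (a : ℝ) / c ≤ LD g n := by
  set L := lengthSet g n
  have hfin := lengthSet_finite hg n
  obtain ⟨u, hu, v, hv, huv⟩ := hL
  have hlt : sInf L < sSup L := by
    have := Nat.sInf_le hu; have := Nat.sInf_le hv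
    have : u ≤ sSup L := le_csSup hfin.bddAbove hu
    have : v ≤ sSup L := le_csSup hfin.bddAbove hv
    omega
  have hcard : 1 ≤ L.ncard := (Set.ncard_pos hfin).mpr ⟨u, hu⟩
  have hcast : (a : ℝ) * ((sSup L : ℕ) - (sInf L : ℕ)) ≤ c * ((L.ncard : ℝ) - 1) := by
    have := (Nat.cast_le (α := ℝ)).mpr h
    push_cast [Nat.cast_sub hlt.le, Nat.cast_sub hcard] at this
    exact this
  rw [LD, div_le_div_iff₀ (by exact_mod_cast hc) (by simpa using hlt)]
  linarith

lemma le_LDsgp (hg : ∀ i, 0 < g i) {c : ℝ} {n₀ : ℕ} (hn₀ : (lengthSet g n₀).Nontrivial)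
    (h : ∀ n, (lengthSet g n).Nontrivial → c ≤ LD g n) : c ≤ LDsgp g := by
  refine le_csInf ⟨_, n₀, ?_, rfl⟩ fun x ⟨n, hn, hx⟩ => hx ▸ h n ?_
  · exact Set.one_lt_ncard_iff_nontrivial_and_finite.mpr ⟨hn₀, lengthSet_finite hg n₀⟩
  · exact (Set.one_lt_ncard_iff_nontrivial_and_finite.mp hn).1

lemma one_lt_of_two_le_ncard_facs (hg : ∀ i, 0 < g i) {n : ℕ} (h : 2 ≤ (facs g n).ncard) :
    1 < k := by
  by_contra hk
  have : Subsingleton (Fin k) := Fin.subsingleton_iff_le_one.mpr (by omega)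
  have hsub : (facs g n).Subsingleton := by
    intro z hz w hw
    funext i
    have hsum : ∀ v ∈ facs g n, v i * g i = n := fun v hv => by
      rw [← hv, Fintype.sum_subsingleton _ i]
    exact Nat.eq_of_mul_eq_mul_right (hg i) ((hsum z hz).trans (hsum w hw).symm)
  have := (Set.ncard_le_one hsub.finite).mpr fun _ ha _ hb => hsub ha hb
  omega

lemma IsMinGen.injective (hmin : IsMinGen g) : Function.Injective g := by
  intro i j hij
  by_contra hne
  have hj : Pi.single j 1 ∈ facs g (g i) := by simpa [hij] using single_mem_facs (g := g) j 1
  exact hmin i ⟨Pi.single j 1, Pi.single_eq_of_ne hne 1, hj⟩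

lemma lengthSet_mul_gen_nontrivial {i j : Fin k} (hij : g i ≠ g j) :
    (lengthSet g (g i * g j)).Nontrivial :=
  ⟨g j, mul_comm (g j) (g i) ▸ mul_gen_mem_lengthSet (g j) i, g i, mul_gen_mem_lengthSet (g i) j,
    hij.symm⟩

/-- The witnesses are `1 + λ M` for large `M`: everything from `N` on lies in `S`, so
`μ - g i₀ * g i₁ ∈ S` and `μ` inherits the two lengths of `g i₀ * g i₁`. -/
lemma infinite_setOf_nonAtom_coprime (hg : ∀ i, 0 < g i) (hmin : IsMinGen g)
    (hgcd : Finset.univ.gcd g = 1) (hk : 1 < k) {lam : ℕ} (hlam : 0 < lam) (B : ℕ) :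
    {mu | NonAtom g mu ∧ (lengthSet g mu).Nontrivial ∧ Nat.Coprime lam mu ∧
      ∀ ℓ ∈ lengthSet g mu, B < ℓ}.Infinite := by
  obtain ⟨N, hN⟩ := exists_forall_ge_mem hgcd
  set i₀ : Fin k := ⟨0, by omega⟩
  set i₁ : Fin k := ⟨1, hk⟩
  set q := g i₀ * g i₁
  have hq : (lengthSet g q).Nontrivial :=
    lengthSet_mul_gen_nontrivial (hmin.injective.ne (by simp [i₀, i₁, Fin.ext_iff]))
  refine Set.infinite_of_forall_exists_gt fun t => ?_
  set M := t + N + q + g i₀ + B * Finset.univ.sup g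
  have hM : M ≤ lam * M := Nat.le_mul_of_pos_left M hlam
  refine ⟨1 + lam * M, ⟨?_, ?_, ?_, fun ℓ hℓ => ?_⟩, by omega⟩
  · exact ⟨1 + lam * M - g i₀, g i₀, by omega, hg i₀, hN _ (by omega), mem_gen i₀, by omega⟩
  · rw [show 1 + lam * M = (1 + lam * M - q) + q by omega]
    exact lengthSet_add_nontrivial (hN _ (by omega)) hq
  · rw [Nat.coprime_add_mul_left_right]
    exact Nat.coprime_one_right lam
  · have := le_mul_sup_of_mem_lengthSet hℓ
    by_contra hle
    have := Nat.mul_le_mul_right (Finset.univ.sup g) (not_lt.mp hle)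
    omega

end Factorizations

lemma exists_eq_add_mul_of_mul_add_mul_eq {lam mu a b a' b' : ℕ} (hcop : Nat.Coprime lam mu)
    (hlam : 0 < lam) (h : mu * a + lam * b = mu * a' + lam * b') (hle : a ≤ a') :
    ∃ s, a' = a + lam * s ∧ b = b' + mu * s := by
  obtain ⟨w, rfl⟩ := Nat.exists_eq_add_of_le hle
  have hw : lam * b = lam * b' + mu * w := by linarith
  obtain ⟨s, rfl⟩ : lam ∣ w := hcop.dvd_of_dvd_mul_left ⟨b - b', by
    rw [Nat.mul_sub, hw, Nat.add_sub_cancel_left]⟩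
  refine ⟨s, rfl, Nat.eq_of_mul_eq_mul_left hlam ?_⟩
  rw [hw]; ring

section Glue

variable {r₁ r₂ : ℕ} {g1 : Fin r₁ → ℕ} {g2 : Fin r₂ → ℕ} {lam mu : ℕ}

variable (g1 g2 lam mu) in
def glue : Fin (r₁ + r₂) → ℕ := Fin.append (fun i => mu * g1 i) (fun j => lam * g2 j)

lemma glue_pos (hpos1 : ∀ i, 0 < g1 i) (hpos2 : ∀ i, 0 < g2 i) (hlam : 0 < lam)
    (hmu : 0 < mu) (i : Fin (r₁ + r₂)) : 0 < glue g1 g2 lam mu i := by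
  refine Fin.addCases (fun i => ?_) (fun j => ?_) i
  · simpa [glue] using Nat.mul_pos hmu (hpos1 i)
  · simpa [glue] using Nat.mul_pos hlam (hpos2 j)

lemma mem_lengthSet_glue_iff {n ℓ : ℕ} :
    ℓ ∈ lengthSet (glue g1 g2 lam mu) n ↔
      ∃ a b ℓ₁ ℓ₂, mu * a + lam * b = n ∧ ℓ₁ ∈ lengthSet g1 a ∧ ℓ₂ ∈ lengthSet g2 b ∧
        ℓ = ℓ₁ + ℓ₂ := by
  have hsum : ∀ z : Fin (r₁ + r₂) → ℕ, ∑ i, z i * glue g1 g2 lam mu i =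
      mu * ∑ i, z (Fin.castAdd r₂ i) * g1 i + lam * ∑ j, z (Fin.natAdd r₁ j) * g2 j := by
    intro z
    simp only [glue, Fin.sum_univ_add, Fin.append_left, Fin.append_right, Finset.mul_sum]
    congr 1 <;> exact Finset.sum_congr rfl fun _ _ => by ring
  constructor
  · rintro ⟨z, hz, rfl⟩
    exact ⟨_, _, _, _, (hsum z).symm.trans hz, ⟨_, rfl, rfl⟩, ⟨_, rfl, rfl⟩, Fin.sum_univ_add z⟩
  · rintro ⟨a, b, ℓ₁, ℓ₂, rfl, ⟨x, rfl, rfl⟩, ⟨y, rfl, rfl⟩, rfl⟩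
    refine ⟨Fin.append x y, ?_, ?_⟩
    · simp [facs, hsum]
    · simp [Fin.sum_univ_add]

lemma lengthSet_glue_mul (hpos1 : ∀ i, 0 < g1 i) (hpos2 : ∀ i, 0 < g2 i) (hlam : 0 < lam)
    (hmu : 0 < mu) (hcop : Nat.Coprime lam mu) :
    lengthSet (glue g1 g2 lam mu) (lam * mu) = lengthSet g1 lam ∪ lengthSet g2 mu := by
  ext ℓ
  rw [mem_lengthSet_glue_iff]
  constructor
  · rintro ⟨a, b, ℓ₁, ℓ₂, hab, hℓ₁, hℓ₂, rfl⟩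
    obtain ⟨s, rfl, hb⟩ := exists_eq_add_mul_of_mul_add_mul_eq (a := 0) (b' := b) hcop hlam
      (by rw [hab]; ring) (Nat.zero_le a)
    obtain rfl | rfl : s = 0 ∨ s = 1 := by
      have : mu * s ≤ mu * 1 := by omega
      have := Nat.le_of_mul_le_mul_left this hmu
      omega
    · simp only [mul_zero, add_zero, lengthSet_zero hpos1, Set.mem_singleton_iff] at hℓ₁ hb
      subst hℓ₁ hb
      exact .inr (by simpa using hℓ₂)
    · rw [(by omega : b = 0), lengthSet_zero hpos2] at hℓ₂
      obtain rfl := hℓ₂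
      exact .inl (by simpa using hℓ₁)
  · rintro (hℓ | hℓ)
    · exact ⟨lam, 0, ℓ, 0, by ring, hℓ, by simp [lengthSet_zero hpos2], rfl⟩
    · exact ⟨0, mu, 0, ℓ, by ring, by simp [lengthSet_zero hpos1], hℓ, by ring⟩

lemma exists_add_eq_of_mul_add_mul_eq {a b a' b' : ℕ} (hcop : Nat.Coprime lam mu)
    (hlam : 0 < lam) (hmu : mem g2 mu) (hb' : mem g2 b')
    (h : mu * a + lam * b = mu * a' + lam * b') (hlt : a < a') :
    ∃ b₂, mem g2 b₂ ∧ b = b₂ + mu := by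
  obtain ⟨s, ha', rfl⟩ := exists_eq_add_mul_of_mul_add_mul_eq hcop hlam h hlt.le
  cases s with
  | zero => omega
  | succ s => exact ⟨b' + s * mu, mem_add hb' (mem_mul s hmu), by ring⟩

lemma glue_repr_eq {a b a' b' : ℕ} (hcop : Nat.Coprime lam mu) (hlam : 0 < lam)
    (hmu : (lengthSet g2 mu).Nontrivial) (hb : mem g2 b) (hb' : mem g2 b')
    (hsb : (lengthSet g2 b).Subsingleton) (hsb' : (lengthSet g2 b').Subsingleton)
    (h : mu * a + lam * b = mu * a' + lam * b') : a = a' ∧ b = b' := by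
  have hmu_mem : mem g2 mu := mem_of_mem_lengthSet hmu.nonempty.some_mem
  rcases lt_trichotomy a a' with hlt | rfl | hlt
  · obtain ⟨b₂, hb₂, rfl⟩ := exists_add_eq_of_mul_add_mul_eq hcop hlam hmu_mem hb' h hlt
    exact absurd hsb (lengthSet_add_nontrivial hb₂ hmu).not_subsingleton
  · exact ⟨rfl, Nat.eq_of_mul_eq_mul_left hlam (by omega)⟩
  · obtain ⟨b₂, hb₂, rfl⟩ := exists_add_eq_of_mul_add_mul_eq hcop hlam hmu_mem hb h.symm hlt
    exact absurd hsb' (lengthSet_add_nontrivial hb₂ hmu).not_subsingleton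

lemma exists_near_mem_lengthSet_glue (hpos1 : ∀ i, 0 < g1 i) (hpos2 : ∀ i, 0 < g2 i) {d : ℕ}
    (hd1 : r₁ * Finset.univ.sup g1 ≤ d) (hd2 : r₂ * Finset.univ.sup g2 ≤ d)
    {n a b α β : ℕ} (hn : mu * a + lam * b = n) (hα : α ∈ lengthSet g1 a)
    (hβ : β ∈ lengthSet g2 b)
    (hnt : (lengthSet g1 a).Nontrivial ∨ (lengthSet g2 b).Nontrivial) :
    ∃ w ∈ lengthSet (glue g1 g2 lam mu) n, w ≠ α + β ∧ w ≤ α + β + d ∧ α + β ≤ w + d := by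
  rcases hnt with hnt | hnt
  · obtain ⟨α', hα', hne, h₁, h₂⟩ := exists_mem_lengthSet_near hpos1 hα hnt
    exact ⟨α' + β, mem_lengthSet_glue_iff.mpr ⟨a, b, α', β, hn, hα', hβ, rfl⟩, by omega,
      by omega, by omega⟩
  · obtain ⟨β', hβ', hne, h₁, h₂⟩ := exists_mem_lengthSet_near hpos2 hβ hnt
    exact ⟨α + β', mem_lengthSet_glue_iff.mpr ⟨a, b, α, β', hn, hα, hβ', rfl⟩, by omega,
      by omega, by omega⟩

lemma exists_small_gap_of_consecutive_glue (hpos1 : ∀ i, 0 < g1 i) (hpos2 : ∀ i, 0 < g2 i)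
    (hlam : 0 < lam) (hcop : Nat.Coprime lam mu) (hmu : (lengthSet g2 mu).Nontrivial) {d : ℕ}
    (hd1 : r₁ * Finset.univ.sup g1 ≤ d) (hd2 : r₂ * Finset.univ.sup g2 ≤ d) {n x y : ℕ}
    (hxy : Consecutive (lengthSet (glue g1 g2 lam mu) n) x y) (hbig : x + d < y) :
    (∃ x' ∈ lengthSet (glue g1 g2 lam mu) n, x' < x ∧ x ≤ x' + d) ∨
      (∃ y' ∈ lengthSet (glue g1 g2 lam mu) n, y < y' ∧ y' ≤ y + d) := by
  obtain ⟨hx, hy, hlt, hnb⟩ := hxy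
  obtain ⟨a, b, α, β, hn, hα, hβ, rfl⟩ := mem_lengthSet_glue_iff.mp hx
  obtain ⟨a', b', α', β', hn', hα', hβ', rfl⟩ := mem_lengthSet_glue_iff.mp hy
  by_cases hnt : (lengthSet g1 a).Nontrivial ∨ (lengthSet g2 b).Nontrivial
  · obtain ⟨w, hw, hne, h₁, h₂⟩ := exists_near_mem_lengthSet_glue hpos1 hpos2 hd1 hd2 hn hα hβ hnt
    exact .inl ⟨w, hw, not_le.mp fun h => hnb w hw ⟨by omega, by omega⟩, h₂⟩
  by_cases hnt' : (lengthSet g1 a').Nontrivial ∨ (lengthSet g2 b').Nontrivial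
  · obtain ⟨w, hw, hne, h₁, h₂⟩ :=
      exists_near_mem_lengthSet_glue hpos1 hpos2 hd1 hd2 hn' hα' hβ' hnt'
    exact .inr ⟨w, hw, not_le.mp fun h => hnb w hw ⟨by omega, by omega⟩, h₁⟩
  simp only [not_or, Set.not_nontrivial_iff] at hnt hnt'
  obtain ⟨rfl, rfl⟩ := glue_repr_eq hcop hlam hmu (mem_of_mem_lengthSet hβ)
    (mem_of_mem_lengthSet hβ') hnt.2 hnt'.2 (hn.trans hn'.symm)
  rw [hnt.1 hα hα', hnt.2 hβ hβ'] at hlt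
  exact absurd hlt (lt_irrefl _)

lemma tasty_glue (hpos1 : ∀ i, 0 < g1 i) (hpos2 : ∀ i, 0 < g2 i) (hlam_mem : mem g1 lam)
    (hlam : 0 < lam) (hcop : Nat.Coprime lam mu) (hmu : (lengthSet g2 mu).Nontrivial)
    (hsep : ∀ ℓ ∈ lengthSet g1 lam, ∀ ℓ' ∈ lengthSet g2 mu,
      max (r₁ * Finset.univ.sup g1) (r₂ * Finset.univ.sup g2) + ℓ < ℓ') :
    Tasty (glue g1 g2 lam mu) := by
  set d := max (r₁ * Finset.univ.sup g1) (r₂ * Finset.univ.sup g2)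
  have hmu0 : 0 < mu := Nat.pos_of_ne_zero <| by
    rintro rfl
    exact hmu.not_subsingleton (lengthSet_zero hpos2 ▸ Set.subsingleton_singleton)
  have hpos := glue_pos hpos1 hpos2 hlam hmu0
  have hbdd : BddAbove (Delta (glue g1 g2 lam mu)) := ⟨_, fun _ => le_of_mem_Delta hpos⟩
  set D := sSup (Delta (glue g1 g2 lam mu))
  have hfin1 := lengthSet_finite hpos1 lam
  have hmax : sSup (lengthSet g1 lam) ∈ lengthSet g1 lam :=
    Nat.sSup_mem (lengthSet_nonempty hlam_mem) hfin1.bddAbove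
  have hmin : sInf (lengthSet g2 mu) ∈ lengthSet g2 mu := Nat.sInf_mem hmu.nonempty
  have hcons : Consecutive (lengthSet (glue g1 g2 lam mu) (lam * mu))
      (sSup (lengthSet g1 lam)) (sInf (lengthSet g2 mu)) := by
    rw [lengthSet_glue_mul hpos1 hpos2 hlam hmu0 hcop]
    refine ⟨.inl hmax, .inr hmin, by have := hsep _ hmax _ hmin; omega, ?_⟩
    rintro c (hc | hc) ⟨h₁, h₂⟩
    · exact (le_csSup hfin1.bddAbove hc).not_gt h₁
    · exact (Nat.sInf_le hc).not_gt h₂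
  have hdD : d < D := by
    have := le_csSup hbdd (sub_mem_Delta hcons)
    have := hsep _ hmax _ hmin
    omega
  have hLD : ∀ n, (lengthSet (glue g1 g2 lam mu) n).Nontrivial →
      ((3 : ℕ) : ℝ) / ((2 * D + d : ℕ) : ℝ) ≤ LD (glue g1 g2 lam mu) n := fun n hn =>
    div_le_LD hpos hn (by omega) <|
      three_mul_sSup_sub_sInf_le (lengthSet_finite hpos n) hn.nonempty hdD.le
        (fun x y hxy => by have := le_csSup hbdd (sub_mem_Delta hxy); omega)
        (fun x y hxy hbig => exists_small_gap_of_consecutive_glue hpos1 hpos2 hlam hcop hmu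
          (le_max_left _ _) (le_max_right _ _) hxy hbig)
  refine lt_of_lt_of_le ?_ (le_LDsgp hpos ⟨_, hcons.1, _, hcons.2.1, hcons.2.2.1.ne⟩ hLD)
  rw [div_lt_div_iff₀ (by exact_mod_cast (show 0 < D by omega))
    (by exact_mod_cast (show 0 < 2 * D + d by omega))]
  exact_mod_cast (show 1 * (2 * D + d) < 3 * D by omega)

end Glue

theorem stmt17_general (r₁ r₂ : ℕ) (g1 : Fin r₁ → ℕ) (g2 : Fin r₂ → ℕ)
    (hpos1 : ∀ i, 0 < g1 i) (hpos2 : ∀ i, 0 < g2 i)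
    (hmin2 : IsMinGen g2)
    (hgcd2 : Finset.univ.gcd g2 = 1)
    (hnf1 : ∃ n : ℕ, 2 ≤ (facs g1 n).ncard)
    (hnf2 : ∃ n : ℕ, 2 ≤ (facs g2 n).ncard) :
    {p : ℕ × ℕ | NonAtom g1 p.1 ∧ NonAtom g2 p.2 ∧ Nat.Coprime p.1 p.2 ∧
      Tasty (Fin.append (fun i => p.2 * g1 i) (fun j => p.1 * g2 j))}.Infinite := by
  have hr₁ := one_lt_of_two_le_ncard_facs hpos1 hnf1.choose_spec
  have hr₂ := one_lt_of_two_le_ncard_facs hpos2 hnf2.choose_spec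
  set i₀ : Fin r₁ := ⟨0, by omega⟩
  set lam := g1 i₀ + g1 i₀
  have hlam : 0 < lam := by have := hpos1 i₀; omega
  set d := max (r₁ * Finset.univ.sup g1) (r₂ * Finset.univ.sup g2)
  refine Set.infinite_of_injOn_mapsTo (Prod.mk_right_injective lam).injOn ?_
    (infinite_setOf_nonAtom_coprime hpos2 hmin2 hgcd2 hr₂ hlam (d + lam))
  rintro mu ⟨hna, hnt, hcop, hlong⟩
  refine ⟨⟨g1 i₀, g1 i₀, hpos1 i₀, hpos1 i₀, mem_gen i₀, mem_gen i₀, rfl⟩, hna, hcop, ?_⟩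
  exact tasty_glue hpos1 hpos2 (mem_add (mem_gen i₀) (mem_gen i₀)) hlam hcop hnt
    fun ℓ hℓ ℓ' hℓ' => by have := le_of_mem_lengthSet hpos1 hℓ; have := hlong ℓ' hℓ'; omega

theorem stmt17 (r₁ r₂ : ℕ) (g1 : Fin r₁ → ℕ) (g2 : Fin r₂ → ℕ)
    (hpos1 : ∀ i, 0 < g1 i) (hpos2 : ∀ i, 0 < g2 i)
    (hmin1 : IsMinGen g1) (hmin2 : IsMinGen g2)
    (hgcd1 : Finset.univ.gcd g1 = 1) (hgcd2 : Finset.univ.gcd g2 = 1)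
    (hnf1 : ∃ n : ℕ, 2 ≤ (facs g1 n).ncard)
    (hnf2 : ∃ n : ℕ, 2 ≤ (facs g2 n).ncard) :
    {p : ℕ × ℕ | NonAtom g1 p.1 ∧ NonAtom g2 p.2 ∧ Nat.Coprime p.1 p.2 ∧
      Tasty (Fin.append (fun i => p.2 * g1 i) (fun j => p.1 * g2 j))}.Infinite :=
  stmt17_general r₁ r₂ g1 g2 hpos1 hpos2 hmin2 hgcd2 hnf1 hnf2

end LengthDensity
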